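/- Let m ≥ 1 and r, k ≥ 0 be integers, let A ⊆ {1, …, r}, and let ℓ⁽¹⁾, …, ℓ⁽ᵐ⁾ be pairwise distinct elements of ℤʳ each supported on A (that is, ℓ⁽ʲ⁾_i = 0 for all i ∉ A). Let σ₁, …, σ_m be entire functions on ℂʳ × ℂᵏ. Suppose that Σ_{j=1}^{m} (Π_{i ∈ A} t_i^{ℓ⁽ʲ⁾_i}) · σ_j(t, w) = 0 for every (t, w) ∈ ℂʳ × ℂᵏ such that t_i ≠ 0 for all i ∈ A and t_i = 0 for all i ∉ A. Then there exists j ∈ {1, …, m} such that σ_j(0, w) = 0 for all w ∈ ℂᵏ. -/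

import Mathlib

/-!
Restrict the identity to the monomial curve `t_i = z ^ c_i` (`i ∈ A`), `t_i = 0` (`i ∉ A`),
with positive weights `c` chosen so that the exponents `e_j = ∑ c_i ℓ⁽ʲ⁾_i` are pairwise distinct:
such weights exist because `c_i = x ^ i` works for every integer `x ≥ 1` outside the finitely many
roots of the polynomials `∑ (ℓ⁽ʲ⁾_i - ℓ⁽ʲ'⁾_i) X ^ i`. Along the curve the identity reads
`∑ z ^ e_j σ_j = 0` for `z ≠ 0`; dividing by `z ^ e_{j₀}` for the smallest exponent and letting
`z → 0` leaves `σ_{j₀}(0, w) = 0`.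
-/

open Function Polynomial Filter Topology

theorem exists_pos_weights_injective {ι : Type*} [Finite ι] {n : ℕ} {v : ι → Fin n → ℤ}
    (hv : Injective v) :
    ∃ c : Fin n → ℕ, (∀ i, 0 < c i) ∧ Injective fun j => ∑ i, (c i : ℤ) * v j i := by
  set bad : Set ℕ := ⋃ (a : ι) (b : ι) (_ : a ≠ b),
    {x | (ofFn n (v a) - ofFn n (v b)).IsRoot (x : ℤ)}
  have hbad : bad.Finite :=
    Set.finite_iUnion fun a => Set.finite_iUnion fun b => Set.finite_iUnion fun hab =>
      (finite_setOfPred_isRoot (sub_ne_zero.2 ((injective_ofFn n).ne (hv.ne hab)))).preimage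
        Nat.cast_injective.injOn
  obtain ⟨x, hx, hx_bad⟩ := (Set.Ici_infinite 1).exists_notMem_finite hbad
  refine ⟨fun i => x ^ (i : ℕ), fun i => pow_pos hx _, fun a b hab => ?_⟩
  by_contra hne
  refine hx_bad (Set.mem_iUnion₂.2 ⟨a, b, Set.mem_iUnion.2 ⟨hne, ?_⟩⟩)
  simp only [Set.mem_ofPred_eq, IsRoot, eval_sub, ofFn_eq_sum_monomial, eval_finsetSum,
    eval_monomial, sub_eq_zero]
  push_cast at hab
  simpa only [mul_comm] using hab

theorem apply_zero_eq_zero_of_sum_zpow_mul_eq_zero {𝕜 ι : Type*} [NontriviallyNormedField 𝕜]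
    [Fintype ι] {f : ι → 𝕜 → 𝕜} {e : ι → ℤ} (he : Injective e) {j₀ : ι}
    (hmin : ∀ j, e j₀ ≤ e j) (hf : ∀ j, ContinuousAt (f j) 0)
    (hsum : ∀ z ≠ 0, ∑ j, z ^ e j * f j z = 0) :
    f j₀ 0 = 0 := by
  set F : 𝕜 → 𝕜 := fun z => ∑ j, z ^ (e j - e j₀) * f j z
  have hF_cont : ContinuousAt F 0 := by
    refine tendsto_finsetSum _ fun j _ => ?_
    exact (continuousAt_zpow₀ _ _ (.inr (sub_nonneg.2 (hmin j)))).mul (hf j)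
  have hF : ∀ z ≠ 0, F z = 0 := fun z hz => by
    calc F z = z ^ (-e j₀) * ∑ j, z ^ e j * f j z := by
          simp only [F, Finset.mul_sum, ← mul_assoc, ← zpow_add₀ hz, sub_eq_neg_add]
      _ = 0 := by rw [hsum z hz, mul_zero]
  have hF₀ : F 0 = f j₀ 0 := by
    refine (Finset.sum_eq_single j₀ (fun j _ hj => ?_) (by simp)).trans (by simp)
    rw [zero_zpow _ (sub_ne_zero.2 (he.ne hj)), zero_mul]
  have hF_lim : Tendsto F (𝓝[≠] 0) (𝓝 0) :=
    tendsto_const_nhds.congr' (eventually_nhdsWithin_of_forall fun z hz => (hF z hz).symm)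
  rw [← hF₀]
  exact tendsto_nhds_unique (hF_cont.tendsto.mono_left nhdsWithin_le_nhds) hF_lim

theorem prod_zpow_eq_zpow_sum₀ {ι G₀ : Type*} [CommGroupWithZero G₀] (s : Finset ι) (f : ι → ℤ)
    {a : G₀} (ha : a ≠ 0) : ∏ i ∈ s, a ^ f i = a ^ ∑ i ∈ s, f i := by
  classical
  induction s using Finset.induction_on with
  | empty => simp
  | insert i s hi ih => rw [Finset.prod_insert hi, Finset.sum_insert hi, zpow_add₀ ha, ih]

section MonomialCurve

variable {ι 𝕜 : Type*} [DecidableEq ι]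

def monomialCurve [MonoidWithZero 𝕜] (A : Finset ι) (c : ι → ℕ) (z : 𝕜) : ι → 𝕜 :=
  fun i => if i ∈ A then z ^ c i else 0

@[simp]
theorem monomialCurve_of_mem [MonoidWithZero 𝕜] {A : Finset ι} {i : ι} (hi : i ∈ A)
    (c : ι → ℕ) (z : 𝕜) : monomialCurve A c z i = z ^ c i :=
  if_pos hi

@[simp]
theorem monomialCurve_of_notMem [MonoidWithZero 𝕜] {A : Finset ι} {i : ι} (hi : i ∉ A)
    (c : ι → ℕ) (z : 𝕜) : monomialCurve A c z i = 0 :=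
  if_neg hi

theorem monomialCurve_zero [MonoidWithZero 𝕜] (A : Finset ι) {c : ι → ℕ} (hc : ∀ i, 0 < c i) :
    monomialCurve A c (0 : 𝕜) = 0 := by
  ext i
  by_cases hi : i ∈ A <;> simp [hi, (hc i).ne']

theorem continuous_monomialCurve [MonoidWithZero 𝕜] [TopologicalSpace 𝕜] [ContinuousMul 𝕜]
    (A : Finset ι) (c : ι → ℕ) : Continuous (monomialCurve (𝕜 := 𝕜) A c) :=
  continuous_pi fun i => by
    by_cases hi : i ∈ A
    · simpa [hi] using continuous_pow (c i)
    · simpa [hi] using continuous_const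

theorem prod_monomialCurve_zpow [CommGroupWithZero 𝕜] (A : Finset ι) (c : ι → ℕ) {z : 𝕜}
    (hz : z ≠ 0) (u : ι → ℤ) :
    ∏ i ∈ A, monomialCurve A c z i ^ u i = z ^ ∑ i ∈ A, (c i : ℤ) * u i := by
  rw [← prod_zpow_eq_zpow_sum₀ A _ hz]
  refine Finset.prod_congr rfl fun i hi => ?_
  rw [monomialCurve_of_mem hi, zpow_mul, zpow_natCast]

end MonomialCurve

/-- Lemma "one to one A" for the trivial family ℂʳ × ℂᵏ → ℂʳ: the
inductive generalization of the linear independence lemma over a subset A of the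
coordinates. -/
theorem stmt_9 (m r k : ℕ) (hm : 1 ≤ m) (A : Finset (Fin r))
    (l : Fin m → Fin r → ℤ) (hl : Function.Injective l)
    (hsupp : ∀ j, ∀ i ∉ A, l j i = 0)
    (σ : Fin m → ((Fin r → ℂ) × (Fin k → ℂ)) → ℂ)
    (hσ : ∀ j, AnalyticOnNhd ℂ (σ j) Set.univ)
    (heq : ∀ (t : Fin r → ℂ) (w : Fin k → ℂ),
      (∀ i ∈ A, t i ≠ 0) → (∀ i ∉ A, t i = 0) →
      ∑ j, (∏ i ∈ A, t i ^ l j i) * σ j (t, w) = 0) :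
    ∃ j, ∀ w : Fin k → ℂ, σ j (0, w) = 0 := by
  obtain ⟨c, hc_pos, hc_inj⟩ := exists_pos_weights_injective hl
  have : Nonempty (Fin m) := ⟨⟨0, hm⟩⟩
  obtain ⟨j₀, hj₀⟩ := Finite.exists_min fun j => ∑ i, (c i : ℤ) * l j i
  refine ⟨j₀, fun w => ?_⟩
  have hA : ∀ j, ∑ i ∈ A, (c i : ℤ) * l j i = ∑ i, (c i : ℤ) * l j i := fun j =>
    Finset.sum_subset (Finset.subset_univ A) fun i _ hi => by simp [hsupp j i hi]
  have hσ_curve : ∀ j, Continuous fun z : ℂ => σ j (monomialCurve A c z, w) := fun j =>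
    (hσ j).continuous.comp ((continuous_monomialCurve A c).prodMk continuous_const)
  have h := apply_zero_eq_zero_of_sum_zpow_mul_eq_zero hc_inj hj₀
    (fun j => (hσ_curve j).continuousAt) fun z hz => by
      have := heq (monomialCurve A c z) w (fun i hi => by simp [hi, hz])
        (fun i hi => monomialCurve_of_notMem hi c z)
      simpa only [prod_monomialCurve_zpow A c hz, hA] using this
  simpa [monomialCurve_zero A hc_pos] using h
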